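/- arXiv:1701.01510 — 3 statements merged into one kernel-verified Lean document; each statement's English description precedes it below -/
import Mathlib

section
/- Let G = (V, E) be a finite strongly connected directed graph with at least two vertices, let α ∈ [0, 1), and let φ : V → ℝ be a positive left eigenvector of the probability matrix M_α with φ M_α = φ. Then G satisfies the curvature dimension inequality CD(2, C − (1 − α)): for every function f : V → ℝ and every vertex v_i ∈ V, Γ₂(f, f)(v_i) ≥ (1/2)(Δf(v_i))² + (C(v_i) − (1 − α)) Γ(f, f)(v_i), where C(v_i) = min over v_j ∈ S^out(v_i) and v_k ∈ S^in(v_i) of { w_{ij}/φ(v_j), w_{ki}/φ(v_k) }. -/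
open Finset

noncomputable section

/-- Out-neighborhood `S^out(x) = {y | (x,y) ∈ E}`. -/
def Sout {V : Type*} [Fintype V] (E : V → V → Prop) [DecidableRel E] (x : V) : Finset V :=
  Finset.univ.filter (fun y => E x y)

/-- In-neighborhood `S^in(x) = {z | (z,x) ∈ E}`. -/
def Sin {V : Type*} [Fintype V] (E : V → V → Prop) [DecidableRel E] (x : V) : Finset V :=
  Finset.univ.filter (fun z => E z x)

/-- `N^out(x) = {x} ∪ S^out(x)`. -/
def Nout {V : Type*} [Fintype V] [DecidableEq V] (E : V → V → Prop) [DecidableRel E]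
    (x : V) : Finset V :=
  insert x (Sout E x)

/-- `N^in(x) = {x} ∪ S^in(x)`. -/
def Nin {V : Type*} [Fintype V] [DecidableEq V] (E : V → V → Prop) [DecidableRel E]
    (x : V) : Finset V :=
  insert x (Sin E x)

/-- Degree `d_x = |S^out(x)|`. -/
def deg {V : Type*} [Fintype V] (E : V → V → Prop) [DecidableRel E] (x : V) : ℕ :=
  (Sout E x).card

/-- The probability matrix `M_α`. -/
def Mat {V : Type*} [Fintype V] [DecidableEq V] (E : V → V → Prop) [DecidableRel E]
    (α : ℝ) (x y : V) : ℝ :=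
  if y = x then α else if E x y then (1 - α) / (deg E x : ℝ) else 0

/-- The weights `w_{ij} = φ(v_i) (M_α)_{i,j}`. -/
def wt {V : Type*} [Fintype V] [DecidableEq V] (E : V → V → Prop) [DecidableRel E]
    (α : ℝ) (φ : V → ℝ) (x y : V) : ℝ :=
  φ x * Mat E α x y

/-- The Laplacian on directed graphs. -/
def lap {V : Type*} [Fintype V] [DecidableEq V] (E : V → V → Prop) [DecidableRel E]
    (α : ℝ) (φ : V → ℝ) (f : V → ℝ) (x : V) : ℝ :=
  (1 / (2 * φ x)) *
    ((∑ y ∈ Sout E x, wt E α φ x y * (f y - f x)) +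
     (∑ z ∈ Sin E x, wt E α φ z x * (f z - f x)))

/-- `Γ(f,g) = (1/2)(Δ(fg) - fΔg - gΔf)`. -/
def Gam {V : Type*} [Fintype V] [DecidableEq V] (E : V → V → Prop) [DecidableRel E]
    (α : ℝ) (φ : V → ℝ) (f g : V → ℝ) (x : V) : ℝ :=
  (1 / 2) * (lap E α φ (f * g) x - f x * lap E α φ g x - g x * lap E α φ f x)

/-- `Γ₂(f,g) = (1/2)(ΔΓ(f,g) - Γ(f,Δg) - Γ(Δf,g))`. -/
def Gam2 {V : Type*} [Fintype V] [DecidableEq V] (E : V → V → Prop) [DecidableRel E]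
    (α : ℝ) (φ : V → ℝ) (f g : V → ℝ) (x : V) : ℝ :=
  (1 / 2) * (lap E α φ (Gam E α φ f g) x - Gam E α φ f (lap E α φ g) x -
    Gam E α φ (lap E α φ f) g x)

/-- `C(v_i)`: the minimum of `w_{ij}/φ(v_j)` over `v_j ∈ S^out(v_i)` and
`w_{ki}/φ(v_k)` over `v_k ∈ S^in(v_i)`. -/
def Cmin {V : Type*} [Fintype V] [DecidableEq V] (E : V → V → Prop) [DecidableRel E]
    (α : ℝ) (φ : V → ℝ) (x : V) : ℝ :=
  sInf ((fun j => wt E α φ x j / φ j) '' (Sout E x : Set V) ∪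
        (fun k => wt E α φ k x / φ k) '' (Sin E x : Set V))


section CDaux
variable {V : Type*} [Fintype V] [DecidableEq V] (E : V → V → Prop) [DecidableRel E]
  (α : ℝ) (φ : V → ℝ)

/-- Symmetrized edge coefficient with zero diagonal. -/
def qw (x y : V) : ℝ :=
  if y = x then 0 else
    ((if E x y then wt E α φ x y else 0) + (if E y x then wt E α φ y x else 0)) / (2 * φ x)

lemma wt_nonneg (hα0 : 0 ≤ α) (hα1 : α ≤ 1) (hφ : ∀ v, 0 ≤ φ v) (x y : V) :
    0 ≤ wt E α φ x y := by
  unfold wt Mat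
  split_ifs
  · exact mul_nonneg (hφ x) hα0
  · exact mul_nonneg (hφ x) (div_nonneg (by linarith) (Nat.cast_nonneg _))
  · simp

lemma qw_nonneg (hα0 : 0 ≤ α) (hα1 : α ≤ 1) (hφ : ∀ v, 0 ≤ φ v) (x y : V) :
    0 ≤ qw E α φ x y := by
  rcases eq_or_ne y x with h | h
  · simp [qw, h]
  · rw [qw, if_neg h]
    apply div_nonneg _ (by nlinarith [hφ x])
    apply add_nonneg <;> split_ifs <;>
      first
        | exact wt_nonneg E α φ hα0 hα1 hφ _ _
        | exact le_refl 0

lemma lap_eq (f : V → ℝ) (x : V) :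
    lap E α φ f x = ∑ y, qw E α φ x y * (f y - f x) := by
  unfold lap qw Sout Sin
  rw [Finset.sum_filter, Finset.sum_filter, ← Finset.sum_add_distrib, Finset.mul_sum]
  refine Finset.sum_congr rfl fun y _ => ?_
  rcases eq_or_ne y x with h | h
  · subst h; simp
  · rw [if_neg h]
    split_ifs <;> ring

lemma Gam_eq (f g : V → ℝ) (x : V) :
    Gam E α φ f g x = (1/2) * ∑ y, qw E α φ x y * ((f y - f x) * (g y - g x)) := by
  unfold Gam
  rw [lap_eq, lap_eq, lap_eq]
  congr 1
  rw [Finset.mul_sum, Finset.mul_sum, ← Finset.sum_sub_distrib, ← Finset.sum_sub_distrib]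
  refine Finset.sum_congr rfl fun y _ => ?_
  simp only [Pi.mul_apply]
  ring

lemma Gam_self (f : V → ℝ) (x : V) :
    Gam E α φ f f x = (1/2) * ∑ y, qw E α φ x y * (f y - f x)^2 := by
  rw [Gam_eq]
  congr 1
  exact Finset.sum_congr rfl fun y _ => by ring



lemma sum_antisymm {W : Type*} [Fintype W] (F : W → W → ℝ) (h : ∀ y z, F y z = -(F z y)) :
    ∑ y, ∑ z, F y z = 0 := by
  have h1 : ∑ y : W, ∑ z : W, F y z = -∑ y : W, ∑ z : W, F z y := by
    rw [← Finset.sum_neg_distrib]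
    exact Finset.sum_congr rfl fun y _ => by
      rw [← Finset.sum_neg_distrib]
      exact Finset.sum_congr rfl fun z _ => h y z
  have h2 : ∑ y : W, ∑ z : W, F z y = ∑ y : W, ∑ z : W, F y z := Finset.sum_comm
  linarith

lemma gam2_formula (f : V → ℝ) (x : V) :
    Gam2 E α φ f f x =
      (1/2) * (lap E α φ f x)^2
      + (1/4) * ∑ y, ∑ z, qw E α φ x y * qw E α φ y z * (f z - 2*f y + f x)^2
      - (1/4) * ∑ y, qw E α φ x y * (∑ z, qw E α φ y z) * (f y - f x)^2
      - (1/2) * (∑ y, qw E α φ x y) * Gam E α φ f f x := by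
  have hsym : Gam E α φ (lap E α φ f) f x = Gam E α φ f (lap E α φ f) x := by
    rw [Gam_eq, Gam_eq]
    exact congrArg _ (Finset.sum_congr rfl fun y _ => by ring)
  unfold Gam2
  rw [hsym, Gam_eq E α φ f (lap E α φ f) x, lap_eq E α φ (Gam E α φ f f) x]
  simp only [lap_eq E α φ f, Gam_self E α φ f]
  simp only [pow_two, mul_sub, sub_mul, mul_add, add_mul, Finset.mul_sum, Finset.sum_mul,
    ← Finset.sum_sub_distrib, ← Finset.sum_add_distrib]
  rw [← sub_eq_zero, ← Finset.sum_sub_distrib]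
  simp only [← Finset.sum_sub_distrib]
  exact sum_antisymm _ (fun y z => by ring)



lemma in_sum (heig : ∀ y : V, ∑ x : V, φ x * Mat E α x y = φ y) (y : V) :
    ∑ x ∈ Finset.univ.erase y, wt E α φ x y = (1 - α) * φ y := by
  have h := heig y
  rw [← Finset.add_sum_erase _ _ (Finset.mem_univ y)] at h
  have hd : φ y * Mat E α y y = α * φ y := by
    unfold Mat; rw [if_pos rfl]; ring
  have : ∑ x ∈ Finset.univ.erase y, wt E α φ x y
      = ∑ x ∈ Finset.univ.erase y, φ x * Mat E α x y := rfl
  rw [this]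
  rw [hd] at h
  linarith

lemma qsum_le (hα0 : 0 ≤ α) (hα1 : α ≤ 1) (hφ : ∀ v : V, 0 < φ v)
    (heig : ∀ y : V, ∑ x : V, φ x * Mat E α x y = φ y) (y : V) :
    ∑ z, qw E α φ y z ≤ 1 - α := by
  have hdiag : qw E α φ y y = 0 := by simp [qw]
  rw [← Finset.add_sum_erase _ _ (Finset.mem_univ y), hdiag, zero_add]
  have hsplit : ∑ z ∈ Finset.univ.erase y, qw E α φ y z
      = ((∑ z ∈ Finset.univ.erase y, if E y z then wt E α φ y z else 0)
        + ∑ z ∈ Finset.univ.erase y, if E z y then wt E α φ z y else 0) / (2 * φ y) := by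
    rw [← Finset.sum_add_distrib, Finset.sum_div]
    refine Finset.sum_congr rfl fun z hz => ?_
    rw [qw, if_neg (Finset.ne_of_mem_erase hz)]
  rw [hsplit]
  have hin : ∑ z ∈ Finset.univ.erase y, (if E z y then wt E α φ z y else 0)
      = (1 - α) * φ y := by
    rw [← in_sum E α φ heig y]
    refine Finset.sum_congr rfl fun z hz => ?_
    split_ifs with h
    · rfl
    · symm
      unfold wt Mat
      rw [if_neg (fun hyz => (Finset.ne_of_mem_erase hz) hyz.symm), if_neg h, mul_zero]
  have hout : ∑ z ∈ Finset.univ.erase y, (if E y z then wt E α φ y z else 0)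
      ≤ (1 - α) * φ y := by
    have hc : ∀ z ∈ Finset.univ.erase y, (if E y z then wt E α φ y z else 0)
        = if E y z then φ y * ((1 - α) / (deg E y : ℝ)) else 0 := by
      intro z hz
      split_ifs with h
      · unfold wt Mat
        rw [if_neg (Finset.ne_of_mem_erase hz), if_pos h]
      · rfl
    rw [Finset.sum_congr rfl hc, Finset.sum_ite, Finset.sum_const_zero, add_zero,
      Finset.sum_const, nsmul_eq_mul]
    have hcard : ((Finset.univ.erase y).filter (fun z => E y z)).card ≤ deg E y := by
      apply Finset.card_le_card
      intro z hz
      simp only [Finset.mem_filter, Finset.mem_erase] at hz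
      simp [Sout, hz.2]
    have hcnn : (0:ℝ) ≤ φ y * ((1 - α) / (deg E y : ℝ)) :=
      mul_nonneg (hφ y).le (div_nonneg (by linarith) (Nat.cast_nonneg _))
    calc (((Finset.univ.erase y).filter (fun z => E y z)).card : ℝ)
          * (φ y * ((1 - α) / (deg E y : ℝ)))
        ≤ (deg E y : ℝ) * (φ y * ((1 - α) / (deg E y : ℝ))) := by
          apply mul_le_mul_of_nonneg_right _ hcnn
          exact_mod_cast hcard
      _ ≤ (1 - α) * φ y := by
          rcases Nat.eq_zero_or_pos (deg E y) with h0 | h0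
          · rw [h0]
            simp
            nlinarith [hφ y]
          · have hne : (deg E y : ℝ) ≠ 0 := Nat.cast_ne_zero.mpr h0.ne'
            exact le_of_eq (by field_simp)
  have h2φ : 0 < 2 * φ y := by linarith [hφ y]
  rw [div_le_iff₀ h2φ]
  nlinarith [hφ y]



lemma gam_nonneg (hα0 : 0 ≤ α) (hα1 : α ≤ 1) (hφ : ∀ v : V, 0 < φ v) (f : V → ℝ) (x : V) :
    0 ≤ Gam E α φ f f x := by
  rw [Gam_self]
  apply mul_nonneg (by norm_num)
  exact Finset.sum_nonneg fun y _ =>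
    mul_nonneg (qw_nonneg E α φ hα0 hα1 (fun v => (hφ v).le) x y) (sq_nonneg _)

lemma cmin_le_q (hα0 : 0 ≤ α) (hα1 : α ≤ 1) (hφ : ∀ v : V, 0 < φ v) (x y : V)
    (hq : qw E α φ x y ≠ 0) :
    Cmin E α φ x / 2 ≤ qw E α φ y x := by
  have hφ' : ∀ v : V, 0 ≤ φ v := fun v => (hφ v).le
  have hyx : y ≠ x := by
    intro h; exact hq (by simp [qw, h])
  have hE : E x y ∨ E y x := by
    by_contra hc
    push_neg at hc
    exact hq (by rw [qw, if_neg hyx, if_neg hc.1, if_neg hc.2]; simp)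
  have hbdd : BddBelow ((fun j => wt E α φ x j / φ j) '' (Sout E x : Set V) ∪
        (fun k => wt E α φ k x / φ k) '' (Sin E x : Set V)) :=
    (((Sout E x).finite_toSet.image _).union ((Sin E x).finite_toSet.image _)).bddBelow
  have key : Cmin E α φ x * φ y ≤
      (if E y x then wt E α φ y x else 0) + (if E x y then wt E α φ x y else 0) := by
    rcases hE with h | h
    · have hmem : wt E α φ x y / φ y ∈ ((fun j => wt E α φ x j / φ j) '' (Sout E x : Set V) ∪
          (fun k => wt E α φ k x / φ k) '' (Sin E x : Set V)) :=
        Or.inl ⟨y, by simp [Sout, h], rfl⟩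
      have h1 : Cmin E α φ x ≤ wt E α φ x y / φ y := csInf_le hbdd hmem
      have h2 : Cmin E α φ x * φ y ≤ wt E α φ x y := by
        rw [← le_div_iff₀ (hφ y)]; exact h1
      have h3 : (0:ℝ) ≤ if E y x then wt E α φ y x else 0 := by
        split_ifs; exacts [wt_nonneg E α φ hα0 hα1 hφ' y x, le_refl 0]
      rw [if_pos h]
      linarith
    · have hmem : wt E α φ y x / φ y ∈ ((fun j => wt E α φ x j / φ j) '' (Sout E x : Set V) ∪
          (fun k => wt E α φ k x / φ k) '' (Sin E x : Set V)) :=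
        Or.inr ⟨y, by simp [Sin, h], rfl⟩
      have h1 : Cmin E α φ x ≤ wt E α φ y x / φ y := csInf_le hbdd hmem
      have h2 : Cmin E α φ x * φ y ≤ wt E α φ y x := by
        rw [← le_div_iff₀ (hφ y)]; exact h1
      have h3 : (0:ℝ) ≤ if E x y then wt E α φ x y else 0 := by
        split_ifs; exacts [wt_nonneg E α φ hα0 hα1 hφ' x y, le_refl 0]
      rw [if_pos h]
      linarith
  rw [qw, if_neg (Ne.symm hyx)]
  rw [div_le_div_iff₀ two_pos (by linarith [hφ y] : (0:ℝ) < 2 * φ y)]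
  linarith

end CDaux

theorem cd_inequality {V : Type*} [Fintype V] [DecidableEq V] (E : V → V → Prop) [DecidableRel E]
    (α : ℝ) (φ : V → ℝ)
    (hcard : 1 < Fintype.card V)
    (hconn : ∀ x y : V, x ≠ y → Relation.TransGen E x y)
    (hα0 : 0 ≤ α) (hα1 : α < 1)
    (hφ : ∀ v : V, 0 < φ v)
    (heig : ∀ y : V, ∑ x : V, φ x * Mat E α x y = φ y) :
    ∀ (f : V → ℝ) (vi : V),
      Gam2 E α φ f f vi ≥
        (1 / 2) * (lap E α φ f vi) ^ 2 +
          (Cmin E α φ vi - (1 - α)) * Gam E α φ f f vi := by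
  intro f x
  have hα1' : α ≤ 1 := hα1.le
  have hφ' : ∀ v : V, 0 ≤ φ v := fun v => (hφ v).le
  have hqnn : ∀ u v : V, 0 ≤ qw E α φ u v := qw_nonneg E α φ hα0 hα1' hφ'
  have hΓ : 0 ≤ Gam E α φ f f x := gam_nonneg E α φ hα0 hα1' hφ f x
  rw [ge_iff_le, gam2_formula E α φ f x]
  -- key bound A : Cmin * Γ ≤ (1/4) * double sum
  have hA : Cmin E α φ x * Gam E α φ f f x ≤
      (1/4) * ∑ y, ∑ z, qw E α φ x y * qw E α φ y z * (f z - 2*f y + f x)^2 := by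
    have hstep1 : ∀ y ∈ Finset.univ,
        qw E α φ x y * qw E α φ y x * (f x - 2*f y + f x)^2 ≤
        ∑ z, qw E α φ x y * qw E α φ y z * (f z - 2*f y + f x)^2 := by
      intro y _
      exact Finset.single_le_sum
        (f := fun z => qw E α φ x y * qw E α φ y z * (f z - 2*f y + f x)^2)
        (fun z _ => mul_nonneg (mul_nonneg (hqnn x y) (hqnn y z)) (sq_nonneg _))
        (Finset.mem_univ x)
    have hstep2 : ∀ y ∈ Finset.univ,
        Cmin E α φ x * ((1/2) * (qw E α φ x y * (f y - f x)^2)) ≤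
        (1/4) * (qw E α φ x y * qw E α φ y x * (f x - 2*f y + f x)^2) := by
      intro y _
      rcases eq_or_ne (qw E α φ x y) 0 with h0 | h0
      · rw [h0]; ring_nf; rfl
      · have hc := cmin_le_q E α φ hα0 hα1' hφ x y h0
        have h4 : (f x - 2*f y + f x)^2 = 4 * (f y - f x)^2 := by ring
        rw [h4]
        nlinarith [mul_nonneg (mul_nonneg (sub_nonneg.mpr hc) (hqnn x y)) (sq_nonneg (f y - f x))]
    rw [Gam_self, Finset.mul_sum, Finset.mul_sum]
    calc ∑ y, Cmin E α φ x * ((1/2) * (qw E α φ x y * (f y - f x)^2))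
        ≤ ∑ y, (1/4) * (qw E α φ x y * qw E α φ y x * (f x - 2*f y + f x)^2) :=
          Finset.sum_le_sum hstep2
      _ ≤ ∑ y, (1/4) * ∑ z, qw E α φ x y * qw E α φ y z * (f z - 2*f y + f x)^2 :=
          Finset.sum_le_sum fun y hy => by
            have := hstep1 y hy
            linarith
      _ = (1/4) * ∑ y, ∑ z, qw E α φ x y * qw E α φ y z * (f z - 2*f y + f x)^2 := by
            rw [Finset.mul_sum]
  have hB : (1/4) * ∑ y, qw E α φ x y * (∑ z, qw E α φ y z) * (f y - f x)^2 ≤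
      (1/2) * (1 - α) * Gam E α φ f f x := by
    have hterm : ∀ y ∈ Finset.univ,
        qw E α φ x y * (∑ z, qw E α φ y z) * (f y - f x)^2 ≤
        (1 - α) * (qw E α φ x y * (f y - f x)^2) := by
      intro y _
      have hd := qsum_le E α φ hα0 hα1' hφ heig y
      nlinarith [mul_nonneg (mul_nonneg (sub_nonneg.mpr hd) (hqnn x y)) (sq_nonneg (f y - f x))]
    have hsum := Finset.sum_le_sum hterm
    rw [← Finset.mul_sum] at hsum
    rw [Gam_self]
    nlinarith [hsum]
  have hP : ∑ y, qw E α φ x y ≤ 1 - α := qsum_le E α φ hα0 hα1' hφ heig x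
  have hPΓ : (1/2) * (∑ y, qw E α φ x y) * Gam E α φ f f x ≤
      (1/2) * (1 - α) * Gam E α φ f f x := by nlinarith [hΓ, hP]
  linarith
end
end

section
/- Let G = (V, E) be a finite strongly connected directed graph with at least two vertices, let α ∈ [0, 1), and let φ : V → ℝ be a positive left eigenvector of the probability matrix M_α with φ M_α = φ. Then for every function f : V → ℝ and every vertex v_i ∈ V, ΔΓ(f, f)(v_i) = (1/(8φ(v_i))) [ Σ_{v_j ∈ N^out(v_i)} (w_{ij}/φ(v_j)) (W^in(v_j) + W^out(v_j)) + Σ_{v_k ∈ N^in(v_i)} (w_{ki}/φ(v_k)) (W^in(v_k) + W^out(v_k)) ], where for a vertex u, W^out(u) = Σ_{v_a ∈ N^out(u)} w_{ua} [ (f(v_a) − f(u))² − (f(u) − f(v_i))² ] and W^in(u) = Σ_{v_b ∈ N^in(u)} w_{bu} [ (f(v_b) − f(u))² − (f(u) − f(v_i))² ]. -/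
open Finset

noncomputable section

/-- `W^out(u)` relative to the base vertex `vi`. -/
def Wout {V : Type*} [Fintype V] [DecidableEq V] (E : V → V → Prop) [DecidableRel E]
    (α : ℝ) (φ : V → ℝ) (f : V → ℝ) (vi u : V) : ℝ :=
  ∑ va ∈ Nout E u, wt E α φ u va * ((f va - f u) ^ 2 - (f u - f vi) ^ 2)

/-- `W^in(u)` relative to the base vertex `vi`. -/
def Win {V : Type*} [Fintype V] [DecidableEq V] (E : V → V → Prop) [DecidableRel E]
    (α : ℝ) (φ : V → ℝ) (f : V → ℝ) (vi u : V) : ℝ :=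
  ∑ vb ∈ Nin E u, wt E α φ vb u * ((f vb - f u) ^ 2 - (f u - f vi) ^ 2)

/-!
Write `s(x, y) = w_{xy} + w_{yx}` (`wsym`). Every row of `M_α` sums to at most `1`, while `φ M_α = φ`
makes the column sums of `w` equal to `φ`; summing over all vertices forces every row sum of `w`
to be `φ` as well, so `∑_y s(x, y) = 2φ(x)`. Hence `Δg(x)` is the `s`-average of `g` minus `g(x)`,
`Γ(f, f)(x) = (4φ(x))⁻¹ ∑_y s(x, y) (f(y) - f(x))²`, and
`W^in(u) + W^out(u) = φ(u) (4Γ(f, f)(u) - 2(f(u) - f(v_i))²)`; substituting these into the right-hand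
side leaves an identity between finite sums.
-/

section Development

variable {V : Type*} [Fintype V] [DecidableEq V] (E : V → V → Prop) [DecidableRel E]
  {α : ℝ} {φ : V → ℝ}

def wsym (α : ℝ) (φ : V → ℝ) (x y : V) : ℝ :=
  wt E α φ x y + wt E α φ y x

lemma wt_eq_zero_of_notMem_Nout {x y : V} (h : y ∉ Nout E x) : wt E α φ x y = 0 := by
  simp only [Nout, Sout, mem_insert, mem_filter, mem_univ, true_and, not_or] at h
  simp [wt, Mat, h.1, h.2]

lemma wt_eq_zero_of_notMem_Nin {x y : V} (h : y ∉ Nin E x) : wt E α φ y x = 0 := by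
  refine wt_eq_zero_of_notMem_Nout E ?_
  simp only [Nin, Sin, Nout, Sout, mem_insert, mem_filter, mem_univ, true_and] at h ⊢
  exact fun hx => h (hx.imp Eq.symm id)

lemma sum_Nout_eq_sum {x : V} {g : V → ℝ} (hg : ∀ y, wt E α φ x y = 0 → g y = 0) :
    ∑ y ∈ Nout E x, g y = ∑ y, g y :=
  sum_subset (subset_univ _) fun _ _ hy => hg _ (wt_eq_zero_of_notMem_Nout E hy)

lemma sum_Nin_eq_sum {x : V} {g : V → ℝ} (hg : ∀ y, wt E α φ y x = 0 → g y = 0) :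
    ∑ y ∈ Nin E x, g y = ∑ y, g y :=
  sum_subset (subset_univ _) fun _ _ hy => hg _ (wt_eq_zero_of_notMem_Nin E hy)

lemma lap_eq_sum_wsym (g : V → ℝ) (x : V) :
    lap E α φ g x = (2 * φ x)⁻¹ * ∑ y, wsym E α φ x y * (g y - g x) := by
  have hout : ∑ y ∈ Sout E x, wt E α φ x y * (g y - g x) = ∑ y, wt E α φ x y * (g y - g x) := by
    rw [← sum_Nout_eq_sum E (fun y h => by rw [h, zero_mul]), Nout,
      sum_insert_of_eq_zero_if_notMem fun _ => by rw [sub_self, mul_zero]]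
  have hin : ∑ y ∈ Sin E x, wt E α φ y x * (g y - g x) = ∑ y, wt E α φ y x * (g y - g x) := by
    rw [← sum_Nin_eq_sum E (fun y h => by rw [h, zero_mul]), Nin,
      sum_insert_of_eq_zero_if_notMem fun _ => by rw [sub_self, mul_zero]]
  simp only [lap, wsym, hout, hin, add_mul, sum_add_distrib, one_div]

lemma gam_self_eq_sum_wsym (f : V → ℝ) (x : V) :
    Gam E α φ f f x = (4 * φ x)⁻¹ * ∑ y, wsym E α φ x y * (f y - f x) ^ 2 := by
  have hsq : ∑ y, wsym E α φ x y * (f y - f x) ^ 2 =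
      ∑ y, wsym E α φ x y * ((f * f) y - (f * f) x) -
        2 * f x * ∑ y, wsym E α φ x y * (f y - f x) := by
    rw [mul_sum, ← sum_sub_distrib]
    exact sum_congr rfl fun y _ => by simp only [Pi.mul_apply]; ring
  rw [Gam, lap_eq_sum_wsym, lap_eq_sum_wsym, hsq, mul_inv, mul_inv]
  ring

lemma Mat_le (hα : α ≤ 1) (x y : V) :
    Mat E α x y ≤ (if y = x then α else 0) + if E x y then (1 - α) / deg E x else 0 := by
  have : 0 ≤ (1 - α) / deg E x := div_nonneg (sub_nonneg.2 hα) (Nat.cast_nonneg _)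
  unfold Mat
  split_ifs <;> linarith

lemma sum_Mat_le_one (hα : α ≤ 1) (x : V) : ∑ y, Mat E α x y ≤ 1 := by
  have hdeg : ∑ y, (if E x y then (1 - α) / deg E x else 0) = deg E x * ((1 - α) / deg E x) := by
    rw [← sum_filter, sum_const, nsmul_eq_mul, deg, Sout]
  have hle : (deg E x : ℝ) * ((1 - α) / deg E x) ≤ 1 - α := by
    rcases eq_or_ne (deg E x : ℝ) 0 with h | h
    · rw [h, zero_mul]; linarith
    · rw [mul_div_cancel₀ _ h]
  calc ∑ y, Mat E α x y
      ≤ ∑ y, ((if y = x then α else 0) + if E x y then (1 - α) / deg E x else 0) :=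
        sum_le_sum fun y _ => Mat_le E hα x y
    _ ≤ 1 := by rw [sum_add_distrib, sum_ite_eq', if_pos (mem_univ x), hdeg]; linarith

lemma sum_wt_row_eq (hα : α ≤ 1) (hφ : ∀ v, 0 ≤ φ v)
    (heig : ∀ y : V, ∑ x : V, φ x * Mat E α x y = φ y) (x : V) :
    ∑ y, wt E α φ x y = φ x := by
  have hle : ∀ x ∈ (univ : Finset V), ∑ y, wt E α φ x y ≤ φ x := fun x _ => by
    simpa only [wt, ← mul_sum] using mul_le_of_le_one_right (hφ x) (sum_Mat_le_one E hα x)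
  have htotal : ∑ x, ∑ y, wt E α φ x y = ∑ x, φ x := by
    rw [sum_comm]
    exact sum_congr rfl fun y _ => heig y
  exact (sum_eq_sum_iff_of_le hle).1 htotal x (mem_univ x)

lemma sum_wsym_eq (hα : α ≤ 1) (hφ : ∀ v, 0 ≤ φ v)
    (heig : ∀ y : V, ∑ x : V, φ x * Mat E α x y = φ y) (x : V) :
    ∑ y, wsym E α φ x y = 2 * φ x := by
  simp only [wsym, sum_add_distrib, sum_wt_row_eq E hα hφ heig]
  simp only [wt, heig]
  ring

section

variable (hsum : ∀ x, ∑ y, wsym E α φ x y = 2 * φ x)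
include hsum

lemma lap_eq_average_sub {x : V} (hx : φ x ≠ 0) (g : V → ℝ) :
    lap E α φ g x = (2 * φ x)⁻¹ * ∑ y, wsym E α φ x y * g y - g x := by
  rw [lap_eq_sum_wsym]
  simp only [mul_sub, sum_sub_distrib, ← sum_mul, hsum]
  field_simp

lemma Win_add_Wout_eq {u : V} (hu : φ u ≠ 0) (f : V → ℝ) (vi : V) :
    Win E α φ f vi u + Wout E α φ f vi u =
      φ u * (4 * Gam E α φ f f u - 2 * (f u - f vi) ^ 2) := by
  rw [Win, Wout, sum_Nin_eq_sum E (fun y h => by rw [h, zero_mul]),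
    sum_Nout_eq_sum E (fun y h => by rw [h, zero_mul]), ← sum_add_distrib,
    gam_self_eq_sum_wsym]
  have hsplit : ∑ y, (wt E α φ y u * ((f y - f u) ^ 2 - (f u - f vi) ^ 2) +
      wt E α φ u y * ((f y - f u) ^ 2 - (f u - f vi) ^ 2)) =
      ∑ y, wsym E α φ u y * (f y - f u) ^ 2 - (f u - f vi) ^ 2 * ∑ y, wsym E α φ u y := by
    rw [mul_sum, ← sum_sub_distrib]
    exact sum_congr rfl fun y _ => by rw [wsym]; ring
  rw [hsplit, hsum]
  field_simp

end

end Development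

theorem lap_gamma_formula_general {V : Type*} [Fintype V] [DecidableEq V] (E : V → V → Prop) [DecidableRel E]
    (α : ℝ) (φ : V → ℝ)
    (hα1 : α < 1)
    (hφ : ∀ v : V, 0 < φ v)
    (heig : ∀ y : V, ∑ x : V, φ x * Mat E α x y = φ y) :
    ∀ (f : V → ℝ) (vi : V),
      lap E α φ (Gam E α φ f f) vi =
        (1 / (8 * φ vi)) *
          ((∑ vj ∈ Nout E vi, (wt E α φ vi vj / φ vj) *
              (Win E α φ f vi vj + Wout E α φ f vi vj)) +
           (∑ vk ∈ Nin E vi, (wt E α φ vk vi / φ vk) *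
              (Win E α φ f vi vk + Wout E α φ f vi vk))) := by
  intro f vi
  have hne : ∀ v, φ v ≠ 0 := fun v => (hφ v).ne'
  have hsum := sum_wsym_eq E hα1.le (fun v => (hφ v).le) heig
  have hterm : ∀ y, (wt E α φ vi y / φ y) * (Win E α φ f vi y + Wout E α φ f vi y) +
      (wt E α φ y vi / φ y) * (Win E α φ f vi y + Wout E α φ f vi y) =
      4 * (wsym E α φ vi y * Gam E α φ f f y) - 2 * (wsym E α φ vi y * (f y - f vi) ^ 2) := by
    intro y
    rw [Win_add_Wout_eq E hsum (hne y), wsym]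
    field_simp [hne y]
  rw [sum_Nout_eq_sum E (fun y h => by rw [h, zero_div, zero_mul]),
    sum_Nin_eq_sum E (fun y h => by rw [h, zero_div, zero_mul]), ← sum_add_distrib,
    sum_congr rfl fun y _ => hterm y, sum_sub_distrib, ← mul_sum, ← mul_sum,
    lap_eq_average_sub E hsum (hne vi), gam_self_eq_sum_wsym E f vi]
  field_simp [hne vi]
  ring

theorem lap_gamma_formula {V : Type*} [Fintype V] [DecidableEq V] (E : V → V → Prop) [DecidableRel E]
    (α : ℝ) (φ : V → ℝ)
    (hcard : 1 < Fintype.card V)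
    (hconn : ∀ x y : V, x ≠ y → Relation.TransGen E x y)
    (hα0 : 0 ≤ α) (hα1 : α < 1)
    (hφ : ∀ v : V, 0 < φ v)
    (heig : ∀ y : V, ∑ x : V, φ x * Mat E α x y = φ y) :
    ∀ (f : V → ℝ) (vi : V),
      lap E α φ (Gam E α φ f f) vi =
        (1 / (8 * φ vi)) *
          ((∑ vj ∈ Nout E vi, (wt E α φ vi vj / φ vj) *
              (Win E α φ f vi vj + Wout E α φ f vi vj)) +
           (∑ vk ∈ Nin E vi, (wt E α φ vk vi / φ vk) *
              (Win E α φ f vi vk + Wout E α φ f vi vk))) :=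
  lap_gamma_formula_general E α φ hα1 hφ heig
end
end

section
/- Let G = (V, E) be a finite strongly connected directed graph with at least two vertices, let α ∈ [0, 1), and let φ : V → ℝ be a positive left eigenvector of the probability matrix M_α with φ M_α = φ. For a function f : V → ℝ and a vertex v_i ∈ V, define H(f)(v_i) = (1/(16φ(v_i))) [ Σ_{v_j ∈ N^out(v_i)} (w_{ij}/φ(v_j)) Σ_{v_a ∈ N^out(v_j)} w_{ja}(f(v_a) − 2f(v_j) + f(v_i))² + Σ_{v_j ∈ N^out(v_i)} (w_{ij}/φ(v_j)) Σ_{v_b ∈ N^in(v_j)} w_{bj}(f(v_b) − 2f(v_j) + f(v_i))² + Σ_{v_k ∈ N^in(v_i)} (w_{ki}/φ(v_k)) Σ_{v_c ∈ N^out(v_k)} w_{kc}(f(v_c) − 2f(v_k) + f(v_i))² + Σ_{v_k ∈ N^in(v_i)} (w_{ki}/φ(v_k)) Σ_{v_d ∈ N^in(v_k)} w_{dk}(f(v_d) − 2f(v_k) + f(v_i))² ]. Then for every f and every v_i, H(f)(v_i) ≥ (C(v_i) + α) Γ(f, f)(v_i), where C(v_i) = min over v_j ∈ S^out(v_i) and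 v_k ∈ S^in(v_i) of { w_{ij}/φ(v_j), w_{ki}/φ(v_k) }. -/
open Finset

noncomputable section

/-- The quantity `H(f)(v_i)`. -/
def Hfun {V : Type*} [Fintype V] [DecidableEq V] (E : V → V → Prop) [DecidableRel E]
    (α : ℝ) (φ : V → ℝ) (f : V → ℝ) (vi : V) : ℝ :=
  (1 / (16 * φ vi)) *
    ((∑ vj ∈ Nout E vi, (wt E α φ vi vj / φ vj) *
        ∑ va ∈ Nout E vj, wt E α φ vj va * (f va - 2 * f vj + f vi) ^ 2) +
     (∑ vj ∈ Nout E vi, (wt E α φ vi vj / φ vj) *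
        ∑ vb ∈ Nin E vj, wt E α φ vb vj * (f vb - 2 * f vj + f vi) ^ 2) +
     (∑ vk ∈ Nin E vi, (wt E α φ vk vi / φ vk) *
        ∑ vc ∈ Nout E vk, wt E α φ vk vc * (f vc - 2 * f vk + f vi) ^ 2) +
     (∑ vk ∈ Nin E vi, (wt E α φ vk vi / φ vk) *
        ∑ vd ∈ Nin E vk, wt E α φ vd vk * (f vd - 2 * f vk + f vi) ^ 2))


/-- Auxiliary: lower bound a sum over `insert v s` by a chosen value at `v`
plus a pointwise lower bound `G` on `s`, assuming `G v ≤ 0` (to handle the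
case `v ∈ s`). -/
lemma sum_insert_lb {V : Type*} [DecidableEq V] (s : Finset V) (v : V) (F G : V → ℝ) (A : ℝ)
    (h1 : ∀ x ∈ s, G x ≤ F x) (h2 : G v ≤ 0) (h3 : A ≤ F v) :
    A + ∑ x ∈ s, G x ≤ ∑ x ∈ insert v s, F x := by
  by_cases hv : v ∈ s
  · rw [Finset.insert_eq_self.mpr hv]
    have e1 := Finset.add_sum_erase s F hv
    have e2 := Finset.add_sum_erase s G hv
    have h4 : ∑ x ∈ s.erase v, G x ≤ ∑ x ∈ s.erase v, F x :=
      Finset.sum_le_sum fun x hx => h1 x (Finset.mem_of_mem_erase hx)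
    linarith
  · rw [Finset.sum_insert hv]
    have h4 : ∑ x ∈ s, G x ≤ ∑ x ∈ s, F x := Finset.sum_le_sum h1
    linarith

theorem H_lower_bound {V : Type*} [Fintype V] [DecidableEq V] (E : V → V → Prop) [DecidableRel E]
    (α : ℝ) (φ : V → ℝ)
    (hcard : 1 < Fintype.card V)
    (hconn : ∀ x y : V, x ≠ y → Relation.TransGen E x y)
    (hα0 : 0 ≤ α) (hα1 : α < 1)
    (hφ : ∀ v : V, 0 < φ v)
    (heig : ∀ y : V, ∑ x : V, φ x * Mat E α x y = φ y) :
    ∀ (f : V → ℝ) (vi : V),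
      Hfun E α φ f vi ≥ (Cmin E α φ vi + α) * Gam E α φ f f vi := by
  intro f vi
  have hφi : (0:ℝ) < φ vi := hφ vi
  have hφi' : φ vi ≠ 0 := ne_of_gt hφi
  have hwnn : ∀ x y : V, 0 ≤ wt E α φ x y := by
    intro x y
    unfold wt Mat
    split_ifs with h h
    · exact mul_nonneg (hφ x).le hα0
    · exact mul_nonneg (hφ x).le (div_nonneg (by linarith) (Nat.cast_nonneg _))
    · simp
  have hwd : ∀ x : V, wt E α φ x x = φ x * α := by
    intro x; simp [wt, Mat]
  have hmemout : ∀ {a b : V}, b ∈ Sout E a → E a b := by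
    intro a b h; exact (Finset.mem_filter.mp h).2
  have hmemin : ∀ {a b : V}, b ∈ Sin E a → E b a := by
    intro a b h; exact (Finset.mem_filter.mp h).2
  set C := Cmin E α φ vi with hCdef
  have hbdd : BddBelow (((fun j => wt E α φ vi j / φ j) '' (Sout E vi : Set V)) ∪
      ((fun k => wt E α φ k vi / φ k) '' (Sin E vi : Set V))) :=
    Set.Finite.bddBelow (Set.Finite.union (Set.Finite.image _ (Sout E vi).finite_toSet)
      (Set.Finite.image _ (Sin E vi).finite_toSet))
  have hCout : ∀ j ∈ Sout E vi, C ≤ wt E α φ vi j / φ j := by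
    intro j hj
    exact csInf_le hbdd (Or.inl ⟨j, Finset.mem_coe.mpr hj, rfl⟩)
  have hCin : ∀ k ∈ Sin E vi, C ≤ wt E α φ k vi / φ k := by
    intro k hk
    exact csInf_le hbdd (Or.inr ⟨k, Finset.mem_coe.mpr hk, rfl⟩)
  set Tout := ∑ j ∈ Sout E vi, wt E α φ vi j * (f j - f vi) ^ 2 with hTout
  set Tin := ∑ k ∈ Sin E vi, wt E α φ k vi * (f k - f vi) ^ 2 with hTin
  have hGam : Gam E α φ f f vi = 1 / (4 * φ vi) * (Tout + Tin) := by
    have e1 : (∑ y ∈ Sout E vi, wt E α φ vi y * (f y * f y - f vi * f vi)) -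
        2 * f vi * (∑ y ∈ Sout E vi, wt E α φ vi y * (f y - f vi)) = Tout := by
      rw [hTout, Finset.mul_sum, ← Finset.sum_sub_distrib]
      exact Finset.sum_congr rfl fun x _ => by ring
    have e2 : (∑ z ∈ Sin E vi, wt E α φ z vi * (f z * f z - f vi * f vi)) -
        2 * f vi * (∑ z ∈ Sin E vi, wt E α φ z vi * (f z - f vi)) = Tin := by
      rw [hTin, Finset.mul_sum, ← Finset.sum_sub_distrib]
      exact Finset.sum_congr rfl fun x _ => by ring
    simp only [Gam, lap, Pi.mul_apply]
    linear_combination (1 / (4 * φ vi)) * e1 + (1 / (4 * φ vi)) * e2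
  rw [ge_iff_le, hGam]
  simp only [Hfun, Nout, Nin]
  have final : ∀ s1 s2 s3 s4 : ℝ,
      α * Tout + α * Tout ≤ s1 →
      α * Tin + (α * Tout + 4 * C * Tout) ≤ s2 →
      α * Tout + (α * Tin + 4 * C * Tin) ≤ s3 →
      α * Tin + α * Tin ≤ s4 →
      (C + α) * (1 / (4 * φ vi) * (Tout + Tin)) ≤ 1 / (16 * φ vi) * (s1 + s2 + s3 + s4) := by
    intro s1 s2 s3 s4 h1 h2 h3 h4
    have key : 4 * (C + α) * (Tout + Tin) ≤ s1 + s2 + s3 + s4 := by linarith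
    calc (C + α) * (1 / (4 * φ vi) * (Tout + Tin))
        = 1 / (16 * φ vi) * (4 * (C + α) * (Tout + Tin)) := by field_simp; ring
      _ ≤ 1 / (16 * φ vi) * (s1 + s2 + s3 + s4) :=
        mul_le_mul_of_nonneg_left key (by positivity)
  apply final
  · -- Sum 1
    have hGsum : ∑ vj ∈ Sout E vi, α * (wt E α φ vi vj * (f vj - f vi) ^ 2) = α * Tout := by
      rw [hTout, Finset.mul_sum]
    calc α * Tout + α * Tout
        = α * Tout + ∑ vj ∈ Sout E vi, α * (wt E α φ vi vj * (f vj - f vi) ^ 2) := by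
          rw [hGsum]
      _ ≤ _ := by
          apply sum_insert_lb
          · intro vj hj
            have hφj' : φ vj ≠ 0 := ne_of_gt (hφ vj)
            have single : wt E α φ vj vj * (f vj - 2 * f vj + f vi) ^ 2 ≤
                ∑ va ∈ insert vj (Sout E vj), wt E α φ vj va * (f va - 2 * f vj + f vi) ^ 2 :=
              Finset.single_le_sum (f := fun va => wt E α φ vj va * (f va - 2 * f vj + f vi) ^ 2)
                (fun x _ => mul_nonneg (hwnn _ _) (sq_nonneg _)) (Finset.mem_insert_self _ _)
            have e : α * (wt E α φ vi vj * (f vj - f vi) ^ 2) =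
                wt E α φ vi vj / φ vj * (wt E α φ vj vj * (f vj - 2 * f vj + f vi) ^ 2) := by
              rw [hwd vj]; field_simp; ring
            rw [e]
            exact mul_le_mul_of_nonneg_left single (div_nonneg (hwnn _ _) (hφ vj).le)
          · simp
          · have hfrac : wt E α φ vi vi / φ vi = α := by
              rw [hwd vi]; field_simp
            rw [hfrac]
            refine mul_le_mul_of_nonneg_left ?_ hα0
            calc Tout = ∑ va ∈ Sout E vi, wt E α φ vi va * (f va - 2 * f vi + f vi) ^ 2 := by
                  rw [hTout]; exact Finset.sum_congr rfl fun x _ => by ring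
              _ ≤ _ := Finset.sum_le_sum_of_subset_of_nonneg (Finset.subset_insert _ _)
                  (fun x _ _ => mul_nonneg (hwnn _ _) (sq_nonneg _))
  · -- Sum 2
    have hGsum : ∑ vj ∈ Sout E vi,
        (α * (wt E α φ vi vj * (f vj - f vi) ^ 2) +
         4 * C * (wt E α φ vi vj * (f vj - f vi) ^ 2)) = α * Tout + 4 * C * Tout := by
      rw [Finset.sum_add_distrib, hTout, Finset.mul_sum, Finset.mul_sum]
    calc α * Tin + (α * Tout + 4 * C * Tout)
        = α * Tin + ∑ vj ∈ Sout E vi,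
            (α * (wt E α φ vi vj * (f vj - f vi) ^ 2) +
             4 * C * (wt E α φ vi vj * (f vj - f vi) ^ 2)) := by rw [hGsum]
      _ ≤ _ := by
          apply sum_insert_lb
          · intro vj hj
            by_cases hne : vj = vi
            · have hz : f vj - f vi = 0 := by rw [hne, sub_self]
              have hrhs : (0:ℝ) ≤ wt E α φ vi vj / φ vj *
                  ∑ vb ∈ insert vj (Sin E vj), wt E α φ vb vj * (f vb - 2 * f vj + f vi) ^ 2 :=
                mul_nonneg (div_nonneg (hwnn _ _) (hφ _).le)
                  (Finset.sum_nonneg fun x _ => mul_nonneg (hwnn _ _) (sq_nonneg _))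
              rw [hz]
              simpa using hrhs
            · have hφj' : φ vj ≠ 0 := ne_of_gt (hφ vj)
              have hvi_mem : vi ∈ insert vj (Sin E vj) :=
                Finset.mem_insert_of_mem
                  (Finset.mem_filter.mpr ⟨Finset.mem_univ _, hmemout hj⟩)
              have hpair_sub : ({vj, vi} : Finset V) ⊆ insert vj (Sin E vj) :=
                Finset.insert_subset_iff.mpr ⟨Finset.mem_insert_self _ _,
                  Finset.singleton_subset_iff.mpr hvi_mem⟩
              have hpairsum : ∑ vb ∈ ({vj, vi} : Finset V),
                  wt E α φ vb vj * (f vb - 2 * f vj + f vi) ^ 2 ≤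
                  ∑ vb ∈ insert vj (Sin E vj), wt E α φ vb vj * (f vb - 2 * f vj + f vi) ^ 2 :=
                Finset.sum_le_sum_of_subset_of_nonneg hpair_sub
                  (fun x _ _ => mul_nonneg (hwnn _ _) (sq_nonneg _))
              rw [Finset.sum_pair hne] at hpairsum
              have hCj := hCout vj hj
              have h5 : α * (wt E α φ vi vj * (f vj - f vi) ^ 2) =
                  wt E α φ vi vj / φ vj * (wt E α φ vj vj * (f vj - 2 * f vj + f vi) ^ 2) := by
                rw [hwd vj]; field_simp; ring
              have h4 : 4 * C * (wt E α φ vi vj * (f vj - f vi) ^ 2) ≤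
                  wt E α φ vi vj / φ vj * (wt E α φ vi vj * (f vi - 2 * f vj + f vi) ^ 2) := by
                have e : wt E α φ vi vj / φ vj * (wt E α φ vi vj * (f vi - 2 * f vj + f vi) ^ 2) =
                    wt E α φ vi vj / φ vj * (4 * (wt E α φ vi vj * (f vj - f vi) ^ 2)) := by
                  ring
                rw [e]
                calc 4 * C * (wt E α φ vi vj * (f vj - f vi) ^ 2)
                    = C * (4 * (wt E α φ vi vj * (f vj - f vi) ^ 2)) := by ring
                  _ ≤ _ := mul_le_mul_of_nonneg_right hCj
                      (mul_nonneg (by norm_num) (mul_nonneg (hwnn _ _) (sq_nonneg _)))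
              have key : α * (wt E α φ vi vj * (f vj - f vi) ^ 2) +
                  4 * C * (wt E α φ vi vj * (f vj - f vi) ^ 2) ≤
                  wt E α φ vi vj / φ vj *
                    (wt E α φ vj vj * (f vj - 2 * f vj + f vi) ^ 2 +
                     wt E α φ vi vj * (f vi - 2 * f vj + f vi) ^ 2) := by
                rw [mul_add]
                exact add_le_add (le_of_eq h5) h4
              exact key.trans (mul_le_mul_of_nonneg_left hpairsum
                (div_nonneg (hwnn _ _) (hφ vj).le))
          · simp
          · have hfrac : wt E α φ vi vi / φ vi = α := by
              rw [hwd vi]; field_simp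
            rw [hfrac]
            refine mul_le_mul_of_nonneg_left ?_ hα0
            calc Tin = ∑ vb ∈ Sin E vi, wt E α φ vb vi * (f vb - 2 * f vi + f vi) ^ 2 := by
                  rw [hTin]; exact Finset.sum_congr rfl fun x _ => by ring
              _ ≤ _ := Finset.sum_le_sum_of_subset_of_nonneg (Finset.subset_insert _ _)
                  (fun x _ _ => mul_nonneg (hwnn _ _) (sq_nonneg _))
  · -- Sum 3
    have hGsum : ∑ vk ∈ Sin E vi,
        (α * (wt E α φ vk vi * (f vk - f vi) ^ 2) +
         4 * C * (wt E α φ vk vi * (f vk - f vi) ^ 2)) = α * Tin + 4 * C * Tin := by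
      rw [Finset.sum_add_distrib, hTin, Finset.mul_sum, Finset.mul_sum]
    calc α * Tout + (α * Tin + 4 * C * Tin)
        = α * Tout + ∑ vk ∈ Sin E vi,
            (α * (wt E α φ vk vi * (f vk - f vi) ^ 2) +
             4 * C * (wt E α φ vk vi * (f vk - f vi) ^ 2)) := by rw [hGsum]
      _ ≤ _ := by
          apply sum_insert_lb
          · intro vk hk
            by_cases hne : vk = vi
            · have hz : f vk - f vi = 0 := by rw [hne, sub_self]
              have hrhs : (0:ℝ) ≤ wt E α φ vk vi / φ vk *
                  ∑ vc ∈ insert vk (Sout E vk), wt E α φ vk vc * (f vc - 2 * f vk + f vi) ^ 2 :=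
                mul_nonneg (div_nonneg (hwnn _ _) (hφ _).le)
                  (Finset.sum_nonneg fun x _ => mul_nonneg (hwnn _ _) (sq_nonneg _))
              rw [hz]
              simpa using hrhs
            · have hφk' : φ vk ≠ 0 := ne_of_gt (hφ vk)
              have hvi_mem : vi ∈ insert vk (Sout E vk) :=
                Finset.mem_insert_of_mem
                  (Finset.mem_filter.mpr ⟨Finset.mem_univ _, hmemin hk⟩)
              have hpair_sub : ({vk, vi} : Finset V) ⊆ insert vk (Sout E vk) :=
                Finset.insert_subset_iff.mpr ⟨Finset.mem_insert_self _ _,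
                  Finset.singleton_subset_iff.mpr hvi_mem⟩
              have hpairsum : ∑ vc ∈ ({vk, vi} : Finset V),
                  wt E α φ vk vc * (f vc - 2 * f vk + f vi) ^ 2 ≤
                  ∑ vc ∈ insert vk (Sout E vk), wt E α φ vk vc * (f vc - 2 * f vk + f vi) ^ 2 :=
                Finset.sum_le_sum_of_subset_of_nonneg hpair_sub
                  (fun x _ _ => mul_nonneg (hwnn _ _) (sq_nonneg _))
              rw [Finset.sum_pair hne] at hpairsum
              have hCk := hCin vk hk
              have h5 : α * (wt E α φ vk vi * (f vk - f vi) ^ 2) =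
                  wt E α φ vk vi / φ vk * (wt E α φ vk vk * (f vk - 2 * f vk + f vi) ^ 2) := by
                rw [hwd vk]; field_simp; ring
              have h4 : 4 * C * (wt E α φ vk vi * (f vk - f vi) ^ 2) ≤
                  wt E α φ vk vi / φ vk * (wt E α φ vk vi * (f vi - 2 * f vk + f vi) ^ 2) := by
                have e : wt E α φ vk vi / φ vk * (wt E α φ vk vi * (f vi - 2 * f vk + f vi) ^ 2) =
                    wt E α φ vk vi / φ vk * (4 * (wt E α φ vk vi * (f vk - f vi) ^ 2)) := by
                  ring
                rw [e]
                calc 4 * C * (wt E α φ vk vi * (f vk - f vi) ^ 2)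
                    = C * (4 * (wt E α φ vk vi * (f vk - f vi) ^ 2)) := by ring
                  _ ≤ _ := mul_le_mul_of_nonneg_right hCk
                      (mul_nonneg (by norm_num) (mul_nonneg (hwnn _ _) (sq_nonneg _)))
              have key : α * (wt E α φ vk vi * (f vk - f vi) ^ 2) +
                  4 * C * (wt E α φ vk vi * (f vk - f vi) ^ 2) ≤
                  wt E α φ vk vi / φ vk *
                    (wt E α φ vk vk * (f vk - 2 * f vk + f vi) ^ 2 +
                     wt E α φ vk vi * (f vi - 2 * f vk + f vi) ^ 2) := by
                rw [mul_add]
                exact add_le_add (le_of_eq h5) h4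
              exact key.trans (mul_le_mul_of_nonneg_left hpairsum
                (div_nonneg (hwnn _ _) (hφ vk).le))
          · simp
          · have hfrac : wt E α φ vi vi / φ vi = α := by
              rw [hwd vi]; field_simp
            rw [hfrac]
            refine mul_le_mul_of_nonneg_left ?_ hα0
            calc Tout = ∑ vc ∈ Sout E vi, wt E α φ vi vc * (f vc - 2 * f vi + f vi) ^ 2 := by
                  rw [hTout]; exact Finset.sum_congr rfl fun x _ => by ring
              _ ≤ _ := Finset.sum_le_sum_of_subset_of_nonneg (Finset.subset_insert _ _)
                  (fun x _ _ => mul_nonneg (hwnn _ _) (sq_nonneg _))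
  · -- Sum 4
    have hGsum : ∑ vk ∈ Sin E vi, α * (wt E α φ vk vi * (f vk - f vi) ^ 2) = α * Tin := by
      rw [hTin, Finset.mul_sum]
    calc α * Tin + α * Tin
        = α * Tin + ∑ vk ∈ Sin E vi, α * (wt E α φ vk vi * (f vk - f vi) ^ 2) := by
          rw [hGsum]
      _ ≤ _ := by
          apply sum_insert_lb
          · intro vk hk
            have hφk' : φ vk ≠ 0 := ne_of_gt (hφ vk)
            have single : wt E α φ vk vk * (f vk - 2 * f vk + f vi) ^ 2 ≤
                ∑ vd ∈ insert vk (Sin E vk), wt E α φ vd vk * (f vd - 2 * f vk + f vi) ^ 2 :=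
              Finset.single_le_sum (f := fun vd => wt E α φ vd vk * (f vd - 2 * f vk + f vi) ^ 2)
                (fun x _ => mul_nonneg (hwnn _ _) (sq_nonneg _)) (Finset.mem_insert_self _ _)
            have e : α * (wt E α φ vk vi * (f vk - f vi) ^ 2) =
                wt E α φ vk vi / φ vk * (wt E α φ vk vk * (f vk - 2 * f vk + f vi) ^ 2) := by
              rw [hwd vk]; field_simp; ring
            rw [e]
            exact mul_le_mul_of_nonneg_left single (div_nonneg (hwnn _ _) (hφ vk).le)
          · simp
          · have hfrac : wt E α φ vi vi / φ vi = α := by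
              rw [hwd vi]; field_simp
            rw [hfrac]
            refine mul_le_mul_of_nonneg_left ?_ hα0
            calc Tin = ∑ vd ∈ Sin E vi, wt E α φ vd vi * (f vd - 2 * f vi + f vi) ^ 2 := by
                  rw [hTin]; exact Finset.sum_congr rfl fun x _ => by ring
              _ ≤ _ := Finset.sum_le_sum_of_subset_of_nonneg (Finset.subset_insert _ _)
                  (fun x _ _ => mul_nonneg (hwnn _ _) (sq_nonneg _))
end
end
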